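/- There exists a constant C > 0 such that for all t ≥ T := √(2r²/(9μ)), f(x(t)) − f_* ≤ C · t^{−2r/3}; that is, the trajectory of the ODE ẍ + (r/t)ẋ + ∇f(x) = 0 satisfies f(x(t)) − f_* = O(t^{−2r/3}). -/

import Mathlib

open scoped RealInnerProductSpace
open Real Set

/-!
With `a = 2r/3`, the energy `E(t) = t^(a-2) (t² (f(x) - f_*) + ½‖a (x - x_*) + t ẋ‖²)` satisfies
`E' ≤ (K / t³) E` for `K = a (1 - r/3)² / μ`: along the ODE the choice `a = 2r/3` cancels the
kinetic terms, strong convexity controls `⟪x - x_*, ∇f(x)⟫`, and the remaining cross term is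
absorbed by completing a square. Hence `E(t) exp(K / (2t²))` is nonincreasing, so `E` stays bounded
for `t ≥ T`, and `t^a (f(x(t)) - f_*) ≤ E(t)`.
-/

theorem le_mul_exp_of_hasDerivAt_le_div_cube {E : ℝ → ℝ} {K T t : ℝ} (hK : 0 ≤ K) (hT : 0 < T)
    (hE : ∀ s ≥ T, ∃ D, HasDerivAt E D s ∧ D ≤ K / s ^ 3 * E s) (hEt : 0 ≤ E t) (hTt : T ≤ t) :
    E t ≤ E T * exp (K / (2 * T ^ 2)) := by
  have hE' : ∀ s ≥ T, HasDerivAt E (deriv E s) s ∧ deriv E s ≤ K / s ^ 3 * E s := by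
    intro s hs
    obtain ⟨D, hD, hDle⟩ := hE s hs
    exact hD.deriv ▸ ⟨hD, hDle⟩
  have hexponent : ∀ s ≠ 0, HasDerivAt (fun s : ℝ => K / (2 * s ^ 2)) (-(K / s ^ 3)) s := by
    intro s hs
    have h := ((hasDerivAt_pow 2 s).inv (pow_ne_zero 2 hs)).const_mul (K / 2)
    refine (h.congr_deriv ?_).congr_of_eventuallyEq (.of_forall fun s => ?_)
    · field_simp; norm_num
    · simp only [Pi.inv_apply]; ring
  set F : ℝ → ℝ := fun s => E s * exp (K / (2 * s ^ 2))
  have hF : ∀ s ≥ T,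
      HasDerivAt F ((deriv E s - K / s ^ 3 * E s) * exp (K / (2 * s ^ 2))) s := by
    intro s hs
    exact ((hE' s hs).1.mul (hexponent s (hT.trans_le hs).ne').exp).congr_deriv (by ring)
  have hanti : AntitoneOn F (Ici T) := by
    refine antitoneOn_of_hasDerivWithinAt_nonpos (convex_Ici T) (f' := fun s =>
      (deriv E s - K / s ^ 3 * E s) * exp (K / (2 * s ^ 2)))
      (fun s hs => (hF s hs).continuousAt.continuousWithinAt) (fun s hs => ?_) (fun s hs => ?_)
    · rw [interior_Ici] at hs
      exact (hF s hs.le).hasDerivWithinAt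
    · rw [interior_Ici] at hs
      exact mul_nonpos_of_nonpos_of_nonneg (sub_nonpos.2 (hE' s hs.le).2) (exp_pos _).le
  calc E t ≤ F t := le_mul_of_one_le_right hEt (one_le_exp (by positivity))
    _ ≤ F T := hanti self_mem_Ici hTt hTt

variable {H : Type*} [NormedAddCommGroup H] [InnerProductSpace ℝ H]

theorem HasGradientAt.hasDerivAt_comp [CompleteSpace H] {f : H → ℝ} {g : H} {x : ℝ → H} {v : H}
    {t : ℝ} (hf : HasGradientAt f g (x t)) (hx : HasDerivAt x v t) :
    HasDerivAt (fun s => f (x s)) ⟪g, v⟫ t := by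
  have h := hf.hasFDerivAt.comp_hasDerivAt t hx
  simp only [InnerProductSpace.toDual_apply_apply] at h
  exact h

theorem lyapunov_rate_le {μ a β t P : ℝ} (hμ : 0 < μ) (ha : 0 ≤ a) (haβ : a + 2 * β = 2)
    (ht : 0 < t) (hP : 0 ≤ P) {u y g : H} (hg : P + μ / 2 * ‖u‖ ^ 2 ≤ ⟪u, g⟫) :
    (a - 2) / t * (t ^ 2 * P + ‖a • u + t • y‖ ^ 2 / 2)
        + (2 * t * P + t ^ 2 * ⟪g, y⟫ + ⟪a • u + t • y, β • y - t • g⟫)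
      ≤ a * β ^ 2 / μ / t ^ 3 * (t ^ 2 * P + ‖a • u + t • y‖ ^ 2 / 2) := by
  have hnorm : ∀ c d : ℝ, ‖c • u + d • y‖ ^ 2
      = c ^ 2 * ‖u‖ ^ 2 + 2 * c * d * ⟪u, y⟫ + d ^ 2 * ‖y‖ ^ 2 := by
    intro c d
    rw [norm_add_sq_real, norm_smul, norm_smul, real_inner_smul_left, real_inner_smul_right,
      mul_pow, mul_pow, Real.norm_eq_abs, Real.norm_eq_abs, sq_abs, sq_abs]
    ring
  have hinner : ⟪a • u + t • y, β • y - t • g⟫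
      = a * β * ⟪u, y⟫ + t * β * ‖y‖ ^ 2 - a * t * ⟪u, g⟫ - t ^ 2 * ⟪g, y⟫ := by
    simp only [inner_add_left, inner_sub_right, real_inner_smul_left, real_inner_smul_right,
      real_inner_self_eq_norm_sq, real_inner_comm y g]
    ring
  -- With `v = a • u + t • y`, `a + 2β = 2` cancels the `‖v‖²` terms, and what is left,
  -- `-(aβ/t)⟪u, v⟫ - (aμt/2)‖u‖²`, is at most `aβ²/(2μt³) ‖v‖²` since `‖μt² u + β v‖² ≥ 0`.
  have hcomb : 0 ≤ a * t * (⟪u, g⟫ - (P + μ / 2 * ‖u‖ ^ 2))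
      + a / (2 * μ * t ^ 3) * ‖(μ * t ^ 2 + β * a) • u + (β * t) • y‖ ^ 2
      + a * β ^ 2 / (μ * t) * P := by
    have := sub_nonneg.2 hg
    positivity
  rw [hnorm] at hcomb
  rw [hnorm, hinner]
  obtain rfl : β = (2 - a) / 2 := by linarith
  refine le_of_sub_nonneg (hcomb.trans_eq ?_)
  field_simp
  ring

noncomputable def lyapunov (f : H → ℝ) (xstar : H) (x x' : ℝ → H) (a t : ℝ) : ℝ :=
  t ^ (a - 2) * (t ^ 2 * (f (x t) - f xstar) + ‖a • (x t - xstar) + t • x' t‖ ^ 2 / 2)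

section Trajectory

variable {f : H → ℝ} {f' : H → H} {xstar : H} {x x' x'' : ℝ → H} {r t : ℝ}

theorem rpow_mul_sub_le_lyapunov (a : ℝ) (ht : 0 < t) :
    t ^ a * (f (x t) - f xstar) ≤ lyapunov f xstar x x' a t := by
  have hpow : t ^ (a - 2) * t ^ 2 = t ^ a := by
    rw [← rpow_natCast, ← rpow_add ht]
    norm_num
  have := mul_nonneg (rpow_nonneg ht.le (a - 2)) (sq_nonneg ‖a • (x t - xstar) + t • x' t‖)
  rw [lyapunov, mul_add, ← mul_assoc, hpow]
  linarith

theorem hasDerivAt_smul_sub_add_smul_of_ode (a : ℝ) (xstar : H) (ht : 0 < t) (hx : HasDerivAt x (x' t) t)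
    (hx' : HasDerivAt x' (x'' t) t) (hode : x'' t + (r / t) • x' t + f' (x t) = 0) :
    HasDerivAt (fun s => a • (x s - xstar) + s • x' s) ((a + 1 - r) • x' t - t • f' (x t)) t := by
  have hx'' : x'' t = -(r / t) • x' t - f' (x t) := by
    rw [← sub_eq_zero, ← hode]
    module
  have htr : t • (r / t) • x' t = r • x' t := by
    rw [smul_smul, mul_div_cancel₀ r ht.ne']
  refine (((hx.sub_const xstar).const_smul a).add ((hasDerivAt_id t).smul hx')).congr_deriv ?_
  rw [hx'', id, smul_sub, neg_smul, smul_neg, htr]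
  module

variable [CompleteSpace H]

theorem hasDerivAt_lyapunov (a : ℝ) (ht : 0 < t) (hf' : HasGradientAt f (f' (x t)) (x t))
    (hx : HasDerivAt x (x' t) t) (hx' : HasDerivAt x' (x'' t) t)
    (hode : x'' t + (r / t) • x' t + f' (x t) = 0) :
    HasDerivAt (lyapunov f xstar x x' a) (t ^ (a - 2) *
      ((a - 2) / t * (t ^ 2 * (f (x t) - f xstar) + ‖a • (x t - xstar) + t • x' t‖ ^ 2 / 2)
        + (2 * t * (f (x t) - f xstar) + t ^ 2 * ⟪f' (x t), x' t⟫
          + ⟪a • (x t - xstar) + t • x' t, (a + 1 - r) • x' t - t • f' (x t)⟫))) t := by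
  have hpot := ((hasDerivAt_pow 2 t).mul ((hf'.hasDerivAt_comp hx).sub_const (f xstar))).add
    ((hasDerivAt_smul_sub_add_smul_of_ode a xstar ht hx hx' hode).norm_sq.div_const 2)
  refine ((hasDerivAt_rpow_const (p := a - 2) (Or.inl ht.ne')).mul hpot).congr_deriv ?_
  simp only [Pi.add_apply, Pi.mul_apply]
  rw [rpow_sub_one ht.ne']
  field_simp
  ring

theorem exists_hasDerivAt_lyapunov_le {μ a : ℝ} (hμ : 0 < μ) (ha : 0 ≤ a) (hra : 3 * a = 2 * r)
    (ht : 0 < t) (hf' : HasGradientAt f (f' (x t)) (x t))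
    (hsc : f xstar ≥ f (x t) + ⟪f' (x t), xstar - x t⟫ + μ / 2 * ‖xstar - x t‖ ^ 2)
    (hmin : f xstar ≤ f (x t)) (hx : HasDerivAt x (x' t) t) (hx' : HasDerivAt x' (x'' t) t)
    (hode : x'' t + (r / t) • x' t + f' (x t) = 0) :
    ∃ D, HasDerivAt (lyapunov f xstar x x' a) D t ∧
      D ≤ a * (a + 1 - r) ^ 2 / μ / t ^ 3 * lyapunov f xstar x x' a t := by
  refine ⟨_, hasDerivAt_lyapunov a ht hf' hx hx' hode, ?_⟩
  have hg : f (x t) - f xstar + μ / 2 * ‖x t - xstar‖ ^ 2 ≤ ⟪x t - xstar, f' (x t)⟫ := by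
    rw [← neg_sub, inner_neg_right, norm_neg, real_inner_comm] at hsc
    linarith
  have hrate := lyapunov_rate_le (β := a + 1 - r) hμ ha (by linarith) ht (sub_nonneg.2 hmin) hg
    (y := x' t)
  rw [lyapunov, mul_left_comm]
  exact mul_le_mul_of_nonneg_left hrate (rpow_nonneg ht.le _)

end Trajectory

theorem stmt_9_general
{n : ℕ} (μ r : ℝ) (hμ : 0 < μ) (hr : 0 < r)
    (f : EuclideanSpace ℝ (Fin n) → ℝ)
    (f' : EuclideanSpace ℝ (Fin n) → EuclideanSpace ℝ (Fin n))
    (hf' : ∀ p, HasGradientAt f (f' p) p)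
    (hsc : ∀ p q, f q ≥ f p + ⟪f' p, q - p⟫ + μ / 2 * ‖q - p‖ ^ 2)
    (xstar : EuclideanSpace ℝ (Fin n)) (hmin : ∀ p, f xstar ≤ f p)
    (x x' x'' : ℝ → EuclideanSpace ℝ (Fin n))
    (hx : ∀ t > (0:ℝ), HasDerivAt x (x' t) t)
    (hx' : ∀ t > (0:ℝ), HasDerivAt x' (x'' t) t)
    (hode : ∀ t > (0:ℝ), x'' t + (r / t) • x' t + f' (x t) = 0) :
    ∃ C > (0:ℝ), ∀ t, Real.sqrt (2 * r ^ 2 / (9 * μ)) ≤ t →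
      f (x t) - f xstar ≤ C * t ^ (-(2 * r / 3)) := by
  set a := 2 * r / 3
  set K := a * (a + 1 - r) ^ 2 / μ
  set T := Real.sqrt (2 * r ^ 2 / (9 * μ))
  set E := lyapunov f xstar x x' a
  have hT : 0 < T := sqrt_pos.2 (by positivity)
  have hE : ∀ s ≥ T, ∃ D, HasDerivAt E D s ∧ D ≤ K / s ^ 3 * E s := fun s hTs =>
    have hs := hT.trans_le hTs
    exists_hasDerivAt_lyapunov_le hμ (by positivity) (by ring) hs (hf' _) (hsc _ _) (hmin _)
      (hx s hs) (hx' s hs) (hode s hs)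
  have hgap : ∀ t > 0, 0 ≤ t ^ a * (f (x t) - f xstar) := fun t ht =>
    mul_nonneg (rpow_nonneg ht.le a) (sub_nonneg.2 (hmin _))
  have hbound : ∀ t ≥ T, t ^ a * (f (x t) - f xstar) ≤ E T * exp (K / (2 * T ^ 2)) :=
    fun t hTt =>
    have ht := hT.trans_le hTt
    (rpow_mul_sub_le_lyapunov a ht).trans <| le_mul_exp_of_hasDerivAt_le_div_cube
      (by positivity) hT hE ((hgap t ht).trans (rpow_mul_sub_le_lyapunov a ht)) hTt
  have hC := (hgap T hT).trans (hbound T le_rfl)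
  refine ⟨E T * exp (K / (2 * T ^ 2)) + 1, by positivity, fun t hTt => ?_⟩
  have ht := hT.trans_le hTt
  rw [rpow_neg ht.le, ← div_eq_mul_inv, le_div_iff₀ (rpow_pos_of_pos ht a), mul_comm]
  linarith [hbound t hTt]

/-- Theorem 6: along the trajectory of `ẍ + (r/t)ẋ + ∇f(x) = 0` with `f`
`μ`-strongly convex, `f(x t) - f_* = O(t^(-2r/3))` for `t ≥ T := √(2r²/(9μ))`. -/
theorem stmt_9
{n : ℕ} (μ r : ℝ) (hμ : 0 < μ) (hr : 0 < r)
    (f : EuclideanSpace ℝ (Fin n) → ℝ)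
    (f' : EuclideanSpace ℝ (Fin n) → EuclideanSpace ℝ (Fin n))
    (hf' : ∀ p, HasGradientAt f (f' p) p)
    (hsc : ∀ p q, f q ≥ f p + ⟪f' p, q - p⟫ + μ / 2 * ‖q - p‖ ^ 2)
    (xstar : EuclideanSpace ℝ (Fin n)) (hmin : ∀ p, f xstar ≤ f p)
    (x x' x'' : ℝ → EuclideanSpace ℝ (Fin n))
    (hx : ∀ t > (0:ℝ), HasDerivAt x (x' t) t)
    (hx' : ∀ t > (0:ℝ), HasDerivAt x' (x'' t) t)
    (hode : ∀ t > (0:ℝ), x'' t + (r / t) • x' t + f' (x t) = 0)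
    (hx0 : ContinuousWithinAt x (Set.Ici 0) 0) :
    ∃ C > (0:ℝ), ∀ t, Real.sqrt (2 * r ^ 2 / (9 * μ)) ≤ t →
      f (x t) - f xstar ≤ C * t ^ (-(2 * r / 3)) :=
  stmt_9_general μ r hμ hr f f' hf' hsc xstar hmin x x' x'' hx hx' hode
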